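/- arXiv:math/0611724 — 2 statements merged into one kernel-verified Lean document; each statement's English description precedes it below -/
import Mathlib

section
/- Let H be a separable infinite-dimensional Hilbert space, E a Banach space, and let 𝒯 ⊆ ℬ(H,E) be uniformly γ-radonifying. Then the closure of 𝒯 in the strong operator topology of ℬ(H,E) is uniformly γ-radonifying. -/
/-!
Given `S_k` in the strong-operator closure of `𝒯`, pick `T_k ∈ 𝒯` with
`‖S_k h_k - T_k h_k‖ < 2⁻ᵏ`. The Gaussian sum `∑ γ_k T_k h_k` converges by hypothesis, and since
every `γ_k` has the same `L²` norm, `∑ γ_k (S_k - T_k) h_k` converges absolutely in `L²(Ω;E)`.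
-/

open MeasureTheory Filter ENNReal ProbabilityTheory
open scoped NNReal Topology

noncomputable section

/-- A Gaussian sequence: i.i.d. standard real Gaussian random variables. -/
structure IsGaussianSeq {Ω : Type*} [MeasurableSpace Ω] (μ : Measure Ω) (γ : ℕ → Ω → ℝ) : Prop where
  measurable : ∀ k, Measurable (γ k)
  indep : iIndepFun γ μ
  gaussian : ∀ k, μ.map (γ k) = gaussianReal 0 1

/-- Convergence in `L²(Ω;E)` of the Gaussian sum `∑ γ_k • x_k`. -/
def GaussianSumConvL2 {Ω : Type*} [MeasurableSpace Ω] (μ : Measure Ω) (γ : ℕ → Ω → ℝ)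
    {E : Type*} [NormedAddCommGroup E] [NormedSpace ℝ E] (x : ℕ → E) : Prop :=
  ∃ g : Ω → E, Tendsto (fun n => eLpNorm (fun ω => (∑ k ∈ Finset.range n, γ k ω • x k) - g ω) 2 μ)
    atTop (𝓝 0)

/-- A family of operators is uniformly γ-radonifying if for every orthonormal basis `(h_k)` of `H`
and every sequence `(T_k)` in `𝒯` the Gaussian sum `∑ γ_k T_k h_k` converges in `L²(Ω;E)`. -/
def UnifGammaRad {Ω : Type*} [MeasurableSpace Ω] (μ : Measure Ω) (γ : ℕ → Ω → ℝ)
    {H E : Type*} [NormedAddCommGroup H] [InnerProductSpace ℝ H]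
    [NormedAddCommGroup E] [NormedSpace ℝ E]
    (𝒯 : Set (H →L[ℝ] E)) : Prop :=
  ∀ (b : HilbertBasis ℕ ℝ H) (T : ℕ → H →L[ℝ] E), (∀ k, T k ∈ 𝒯) →
    GaussianSumConvL2 μ γ (fun k => T k (b k))

/-- The closure of a set of operators in the strong operator topology. -/
def sotClosure {H E : Type*} [NormedAddCommGroup H] [InnerProductSpace ℝ H]
    [NormedAddCommGroup E] [NormedSpace ℝ E] (𝒯 : Set (H →L[ℝ] E)) : Set (H →L[ℝ] E) :=
  {S | ∀ ε > (0 : ℝ), ∀ s : Finset H, ∃ T ∈ 𝒯, ∀ h ∈ s, ‖S h - T h‖ < ε}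

section Lp

variable {Ω E : Type*} [MeasurableSpace Ω] {μ : Measure Ω} [NormedAddCommGroup E] {p : ℝ≥0∞}

theorem ENNReal.tendsto_rpow_nhds_zero_iff {ι : Type*} {l : Filter ι} {y : ℝ} (hy : 0 < y)
    {u : ι → ℝ≥0∞} : Tendsto (fun i => u i ^ y) l (𝓝 0) ↔ Tendsto u l (𝓝 0) := by
  simpa [Function.comp_def, ENNReal.zero_rpow_of_pos hy] using
    ((ENNReal.orderIsoRpow y hy).toHomeomorph.isInducing.tendsto_nhds_iff (l := l) (y := 0)).symm

/-- Unlike `eLpNorm_add_le'`, `g i` may be non-measurable: `lintegral_add_left'` only asks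
for measurability of one summand. -/
theorem tendsto_eLpNorm_add_of_aestronglyMeasurable_left {ι : Type*} {l : Filter ι}
    (hp0 : p ≠ 0) (hp : p ≠ ∞) {f g : ι → Ω → E} (hf : ∀ i, AEStronglyMeasurable (f i) μ)
    (hf0 : Tendsto (fun i => eLpNorm (f i) p μ) l (𝓝 0))
    (hg0 : Tendsto (fun i => eLpNorm (g i) p μ) l (𝓝 0)) :
    Tendsto (fun i => eLpNorm (f i + g i) p μ) l (𝓝 0) := by
  have hq : 0 < p.toReal := ENNReal.toReal_pos hp0 hp
  simp only [eLpNorm_eq_lintegral_rpow_enorm_toReal hp0 hp,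
    ENNReal.tendsto_rpow_nhds_zero_iff (one_div_pos.2 hq)] at hf0 hg0 ⊢
  set C := LpAddConst (ENNReal.ofReal p.toReal)⁻¹
  have hC : C ≠ ∞ := (LpAddConst_lt_top _).ne
  have hle : ∀ i, ∫⁻ ω, ‖(f i + g i) ω‖ₑ ^ p.toReal ∂μ ≤
      C * (∫⁻ ω, ‖f i ω‖ₑ ^ p.toReal ∂μ + ∫⁻ ω, ‖g i ω‖ₑ ^ p.toReal ∂μ) := fun i =>
    calc ∫⁻ ω, ‖(f i + g i) ω‖ₑ ^ p.toReal ∂μ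
        ≤ ∫⁻ ω, C * (‖f i ω‖ₑ ^ p.toReal + ‖g i ω‖ₑ ^ p.toReal) ∂μ :=
          lintegral_mono fun ω => (ENNReal.rpow_le_rpow (enorm_add_le _ _) hq.le).trans
            (ENNReal.rpow_add_le_mul_rpow_add_rpow' _ _ hq.le)
      _ = _ := by
          rw [lintegral_const_mul' _ _ hC, lintegral_add_left' ((hf i).enorm.pow_const _)]
  have hbound := ENNReal.Tendsto.const_mul (hf0.add hg0) (Or.inr hC)
  rw [add_zero, mul_zero] at hbound
  exact tendsto_of_tendsto_of_tendsto_of_le_of_le tendsto_const_nhds hbound (fun _ => bot_le) hle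

theorem exists_tendsto_eLpNorm_sum_sub_of_tsum_ne_top [Fact (1 ≤ p)] [CompleteSpace E]
    {f : ℕ → Ω → E} (hf : ∀ k, MemLp (f k) p μ) (hsum : ∑' k, eLpNorm (f k) p μ ≠ ∞) :
    ∃ g : Ω → E, AEStronglyMeasurable g μ ∧
      Tendsto (fun n => eLpNorm (fun ω => ∑ k ∈ Finset.range n, f k ω - g ω) p μ) atTop (𝓝 0) := by
  set F : ℕ → Lp E p μ := fun k => (hf k).toLp
  have hF : Summable F := Summable.of_enorm (by simpa [F, Lp.enorm_toLp] using hsum)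
  refine ⟨⇑(∑' k, F k), Lp.aestronglyMeasurable _, ?_⟩
  refine ((Lp.tendsto_Lp_iff_tendsto_eLpNorm' _ _).1 hF.tendsto_sum_tsum_nat).congr fun n =>
    eLpNorm_congr_ae ?_
  filter_upwards [Lp.coeFn_fun_finsetSum (Finset.range n) F,
    ae_all_iff.2 fun k => (hf k).coeFn_toLp] with ω hsumω hFω
  simp only [Pi.sub_apply, hsumω, F, hFω]

end Lp

namespace IsGaussianSeq

variable {Ω E : Type*} [MeasurableSpace Ω] {μ : Measure Ω} {γ : ℕ → Ω → ℝ}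
  [NormedAddCommGroup E] [NormedSpace ℝ E] {p : ℝ≥0∞}

theorem eLpNorm_eq (hγ : IsGaussianSeq μ γ) (k : ℕ) :
    eLpNorm (γ k) p μ = eLpNorm id p (gaussianReal 0 1) := by
  rw [← hγ.gaussian k, eLpNorm_map_measure aestronglyMeasurable_id (hγ.measurable k).aemeasurable]
  rfl

theorem eLpNorm_smul_const (hγ : IsGaussianSeq μ γ) (k : ℕ) (x : E) :
    eLpNorm (fun ω => γ k ω • x) p μ = ‖x‖ₑ * eLpNorm id p (gaussianReal 0 1) := by
  rw [← hγ.eLpNorm_eq k, ← enorm_norm x, ← eLpNorm_const_smul]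
  exact eLpNorm_congr_norm_ae (ae_of_all _ fun ω => by simp [norm_smul, mul_comm])

theorem memLp_smul_const (hγ : IsGaussianSeq μ γ) (hp : p ≠ ∞) (k : ℕ) (x : E) :
    MemLp (fun ω => γ k ω • x) p μ :=
  ⟨(hγ.measurable k).aestronglyMeasurable.smul_const x, by
    rw [hγ.eLpNorm_smul_const]
    exact ENNReal.mul_lt_top enorm_lt_top (memLp_id_gaussianReal' p hp).eLpNorm_lt_top⟩

theorem exists_tendsto_eLpNorm_sum_smul [Fact (1 ≤ p)] [CompleteSpace E]
    (hγ : IsGaussianSeq μ γ) (hp : p ≠ ∞) {x : ℕ → E} (hx : Summable fun k => ‖x k‖) :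
    ∃ g : Ω → E, AEStronglyMeasurable g μ ∧
      Tendsto (fun n => eLpNorm (fun ω => ∑ k ∈ Finset.range n, γ k ω • x k - g ω) p μ)
        atTop (𝓝 0) := by
  refine exists_tendsto_eLpNorm_sum_sub_of_tsum_ne_top (fun k => hγ.memLp_smul_const hp k (x k)) ?_
  simp_rw [hγ.eLpNorm_smul_const, ENNReal.tsum_mul_right]
  exact ENNReal.mul_ne_top (tsum_enorm_ne_top_iff_summable_norm.2 hx)
    (memLp_id_gaussianReal' p hp).eLpNorm_ne_top

end IsGaussianSeq

theorem GaussianSumConvL2.of_summable_norm_sub {Ω E : Type*} [MeasurableSpace Ω] {μ : Measure Ω}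
    {γ : ℕ → Ω → ℝ} [NormedAddCommGroup E] [NormedSpace ℝ E] [CompleteSpace E]
    (hγ : IsGaussianSeq μ γ) {x y : ℕ → E} (hx : GaussianSumConvL2 μ γ x)
    (hxy : Summable fun k => ‖y k - x k‖) : GaussianSumConvL2 μ γ y := by
  obtain ⟨g, hg⟩ := hx
  obtain ⟨g', hg'_meas, hg'⟩ := hγ.exists_tendsto_eLpNorm_sum_smul (p := 2) ENNReal.ofNat_ne_top hxy
  have hmeas : ∀ n, AEStronglyMeasurable
      (fun ω => ∑ k ∈ Finset.range n, γ k ω • (y k - x k) - g' ω) μ := fun n =>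
    (Finset.aestronglyMeasurable_fun_sum _ fun k _ =>
      (hγ.measurable k).aestronglyMeasurable.smul_const _).sub hg'_meas
  refine ⟨g' + g, (tendsto_eLpNorm_add_of_aestronglyMeasurable_left two_ne_zero
    ENNReal.ofNat_ne_top hmeas hg' hg).congr fun n => ?_⟩
  congr 1 with ω
  simp only [Pi.add_apply, smul_sub, Finset.sum_sub_distrib]
  abel

theorem sotClosure_unifGammaRad_general
    {Ω : Type*} [MeasurableSpace Ω] (μ : Measure Ω)
    (γ : ℕ → Ω → ℝ) (hγ : IsGaussianSeq μ γ)
    {H E : Type*} [NormedAddCommGroup H] [InnerProductSpace ℝ H]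
    [NormedAddCommGroup E] [NormedSpace ℝ E] [CompleteSpace E]
    (𝒯 : Set (H →L[ℝ] E)) (h𝒯 : UnifGammaRad μ γ 𝒯) :
    UnifGammaRad μ γ (sotClosure 𝒯) := by
  intro b S hS
  have hclose : ∀ k, ∃ T ∈ 𝒯, ‖S k (b k) - T (b k)‖ < (1 / 2) ^ k := fun k => by
    obtain ⟨T, hT, hlt⟩ := hS k ((1 / 2) ^ k) (by positivity) {b k}
    exact ⟨T, hT, hlt (b k) (Finset.mem_singleton_self _)⟩
  choose T hT𝒯 hT using hclose
  exact (h𝒯 b T hT𝒯).of_summable_norm_sub hγ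
    (summable_geometric_two.of_nonneg_of_le (fun _ => norm_nonneg _) fun k => (hT k).le)

theorem sotClosure_unifGammaRad
    {Ω : Type*} [MeasurableSpace Ω] (μ : Measure Ω) [IsProbabilityMeasure μ]
    (γ : ℕ → Ω → ℝ) (hγ : IsGaussianSeq μ γ)
    {H E : Type*} [NormedAddCommGroup H] [InnerProductSpace ℝ H] [CompleteSpace H]
    [NormedAddCommGroup E] [NormedSpace ℝ E] [CompleteSpace E]
    (hH : Nonempty (HilbertBasis ℕ ℝ H))
    (𝒯 : Set (H →L[ℝ] E)) (h𝒯 : UnifGammaRad μ γ 𝒯) :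
    UnifGammaRad μ γ (sotClosure 𝒯) :=
  sotClosure_unifGammaRad_general μ γ hγ 𝒯 h𝒯
end
end

section
/- Let H be a Hilbert space and let (h_n)_{n∈ℤ} be a sequence in H. Suppose there exists a function φ : ℕ → ℝ₊ such that |[h_n, h_m]| ≤ φ(n−m) for all n ≥ m in ℤ and ∑_{j∈ℕ} φ(j) < ∞. Then (h_n)_{n∈ℤ} is a Hilbert sequence; in fact for all scalar sequences (α_n)_{n∈ℤ} ∈ ℓ²(ℤ) one has ‖∑_{n∈ℤ} α_n h_n‖² ≤ (φ(0) + 2∑_{j≥1} φ(j)) ∑_{n∈ℤ} |α_n|². -/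
/-! Expanding `‖∑ α_n h_n‖²` bounds it by the quadratic form of the Toeplitz kernel
`φ |n - m|` evaluated at `(‖α_n‖)`; by Schur's test that form is at most the common row sum
`∑_{k ∈ ℤ} φ |k| = φ 0 + 2 ∑_{j ≥ 1} φ j` times `∑ ‖α_n‖²`. The bound on finite sums makes the
partial sums of `∑ α_n h_n` Cauchy for `α ∈ ℓ²`, and passes to the limit. -/

open Filter
open scoped Topology

noncomputable section

/-- `(h_i)_{i ∈ ι}` is a Hilbert sequence with admissible constant `C`:
`‖∑ α_i h_i‖² ≤ C² ∑ |α_i|²` for all (finitely supported) scalar sequences. -/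
def IsHilbertSeqWith (𝕜 : Type*) {H ι : Type*} [RCLike 𝕜] [NormedAddCommGroup H]
    [InnerProductSpace 𝕜 H] (h : ι → H) (C : ℝ) : Prop :=
  ∀ (s : Finset ι) (α : ι → 𝕜),
    ‖∑ n ∈ s, α n • h n‖ ^ 2 ≤ C ^ 2 * ∑ n ∈ s, ‖α n‖ ^ 2

open Finset

theorem HasSum.comp_natAbs {M : Type*} [AddCommMonoid M] [TopologicalSpace M] [ContinuousAdd M]
    {φ : ℕ → M} {S : M} (hφ : HasSum (fun j => φ (j + 1)) S) :
    HasSum (fun k : ℤ => φ k.natAbs) (φ 0 + 2 • S) := by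
  have hpos : HasSum (fun n : ℕ => φ ((n : ℤ) + 1).natAbs) S := by
    simpa only [Int.natAbs_natCast, ← Nat.cast_succ] using hφ
  have hneg : HasSum (fun n : ℕ => φ (-((n : ℤ) + 1)).natAbs) S := by
    simpa only [Int.natAbs_neg, Int.natAbs_natCast, ← Nat.cast_succ] using hφ
  have := HasSum.of_add_one_of_neg_add_one (f := fun k : ℤ => φ k.natAbs) hpos hneg
  rwa [Int.natAbs_zero, add_comm S, add_assoc, ← two_nsmul] at this

theorem lp.summable_norm_sq {ι : Type*} {E : ι → Type*} [∀ i, NormedAddCommGroup (E i)]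
    (f : lp E 2) : Summable fun i => ‖f i‖ ^ 2 := by
  simpa using (lp.memℓp f).summable (by norm_num : 0 < (2 : ENNReal).toReal)

theorem sum_sum_mul_mul_le_of_sum_le {ι : Type*} {s : Finset ι} (a : ι → ℝ) {k : ι → ι → ℝ}
    {K : ℝ} (hk0 : ∀ n m, 0 ≤ k n m) (hsymm : ∀ n m, k n m = k m n)
    (hrow : ∀ n, ∑ m ∈ s, k n m ≤ K) :
    ∑ n ∈ s, ∑ m ∈ s, a n * a m * k n m ≤ K * ∑ n ∈ s, a n ^ 2 := by
  -- Schur test: `a n a m ≤ (a n² + a m²) / 2`, and both halves are row sums by symmetry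
  have hswap : ∑ n ∈ s, ∑ m ∈ s, a m ^ 2 * k n m = ∑ n ∈ s, ∑ m ∈ s, a n ^ 2 * k n m := by
    rw [sum_comm]
    exact sum_congr rfl fun n _ => sum_congr rfl fun m _ => by rw [hsymm]
  calc ∑ n ∈ s, ∑ m ∈ s, a n * a m * k n m
      ≤ ∑ n ∈ s, ∑ m ∈ s, (a n ^ 2 * k n m + a m ^ 2 * k n m) / 2 :=
        sum_le_sum fun n _ => sum_le_sum fun m _ => by
          nlinarith [mul_nonneg (sq_nonneg (a n - a m)) (hk0 n m)]
    _ = ∑ n ∈ s, a n ^ 2 * ∑ m ∈ s, k n m := by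
        simp only [← sum_div, sum_add_distrib, hswap, mul_sum]
        ring
    _ ≤ ∑ n ∈ s, a n ^ 2 * K :=
        sum_le_sum fun n _ => mul_le_mul_of_nonneg_left (hrow n) (sq_nonneg _)
    _ = K * ∑ n ∈ s, a n ^ 2 := by rw [mul_sum]; simp only [mul_comm]

theorem sum_natAbs_sub_le_tsum {φ : ℕ → ℝ} (hφ : ∀ j, 0 ≤ φ j)
    (hsum : Summable fun k : ℤ => φ k.natAbs) (s : Finset ℤ) (n : ℤ) :
    ∑ m ∈ s, φ (n - m).natAbs ≤ ∑' k : ℤ, φ k.natAbs := by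
  rw [← (Equiv.subLeft n).tsum_eq]
  exact ((Equiv.subLeft n).summable_iff.2 hsum).sum_le_tsum s fun _ _ => hφ _

section InnerProductSpace

variable {𝕜 H ι : Type*} [RCLike 𝕜] [NormedAddCommGroup H] [InnerProductSpace 𝕜 H]

theorem norm_sum_smul_sq_le_sum_sum_norm_inner (v : ι → H) (s : Finset ι) (α : ι → 𝕜) :
    ‖∑ n ∈ s, α n • v n‖ ^ 2 ≤
      ∑ n ∈ s, ∑ m ∈ s, ‖α n‖ * ‖α m‖ * ‖(inner 𝕜 (v n) (v m) : 𝕜)‖ := by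
  calc ‖∑ n ∈ s, α n • v n‖ ^ 2
      = RCLike.re (inner 𝕜 (∑ n ∈ s, α n • v n) (∑ m ∈ s, α m • v m) : 𝕜) :=
        (inner_self_eq_norm_sq _).symm
    _ ≤ ‖∑ n ∈ s, ∑ m ∈ s, (inner 𝕜 (α n • v n) (α m • v m) : 𝕜)‖ := by
        simp only [sum_inner (𝕜 := 𝕜), inner_sum (𝕜 := 𝕜)]
        exact RCLike.re_le_norm _
    _ ≤ ∑ n ∈ s, ∑ m ∈ s, ‖(inner 𝕜 (α n • v n) (α m • v m) : 𝕜)‖ :=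
        (norm_sum_le _ _).trans (sum_le_sum fun n _ => norm_sum_le _ _)
    _ = _ := by
        simp only [inner_smul_left, inner_smul_right, norm_mul, RCLike.norm_conj]
        exact sum_congr rfl fun n _ => sum_congr rfl fun m _ => by ring

theorem norm_sum_smul_sq_le_of_norm_inner_le_natAbs {v : ℤ → H} {φ : ℕ → ℝ} {K : ℝ}
    (hφ : ∀ j, 0 ≤ φ j) (hK : HasSum (fun k : ℤ => φ k.natAbs) K)
    (hv : ∀ n m, ‖(inner 𝕜 (v n) (v m) : 𝕜)‖ ≤ φ (n - m).natAbs)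
    (s : Finset ℤ) (α : ℤ → 𝕜) :
    ‖∑ n ∈ s, α n • v n‖ ^ 2 ≤ K * ∑ n ∈ s, ‖α n‖ ^ 2 := by
  calc ‖∑ n ∈ s, α n • v n‖ ^ 2
      ≤ ∑ n ∈ s, ∑ m ∈ s, ‖α n‖ * ‖α m‖ * φ (n - m).natAbs :=
        (norm_sum_smul_sq_le_sum_sum_norm_inner v s α).trans <|
          sum_le_sum fun n _ => sum_le_sum fun m _ =>
            mul_le_mul_of_nonneg_left (hv n m) (by positivity)
    _ ≤ K * ∑ n ∈ s, ‖α n‖ ^ 2 :=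
        sum_sum_mul_mul_le_of_sum_le _ (fun _ _ => hφ _)
          (fun n m => by rw [← Int.natAbs_neg, neg_sub])
          (fun n => hK.tsum_eq ▸ sum_natAbs_sub_le_tsum hφ hK.summable s n)

namespace IsHilbertSeqWith

variable {v : ι → H} {C : ℝ}

theorem mono {C' : ℝ} (hv : IsHilbertSeqWith 𝕜 v C) (hC : 0 ≤ C) (hCC' : C ≤ C') :
    IsHilbertSeqWith 𝕜 v C' := fun s α =>
  (hv s α).trans <| mul_le_mul_of_nonneg_right (pow_le_pow_left₀ hC hCC' 2) (by positivity)

variable [CompleteSpace H]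

theorem summable_smul (hv : IsHilbertSeqWith 𝕜 v C) (α : lp (fun _ : ι => 𝕜) 2) :
    Summable fun n => α n • v n := by
  rw [summable_iff_vanishing_norm]
  intro ε hε
  obtain ⟨s, hs⟩ := summable_iff_vanishing_norm.1 (lp.summable_norm_sq α)
    (ε ^ 2 / (C ^ 2 + 1)) (by positivity)
  refine ⟨s, fun t ht => lt_of_pow_lt_pow_left₀ 2 hε.le ?_⟩
  have ht' : ∑ n ∈ t, ‖α n‖ ^ 2 < ε ^ 2 / (C ^ 2 + 1) :=
    (Real.le_norm_self _).trans_lt (hs t ht)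
  calc ‖∑ n ∈ t, α n • v n‖ ^ 2 ≤ C ^ 2 * ∑ n ∈ t, ‖α n‖ ^ 2 := hv t α
    _ ≤ C ^ 2 * (ε ^ 2 / (C ^ 2 + 1)) := by gcongr
    _ < ε ^ 2 := by
        rw [mul_div_assoc', div_lt_iff₀ (by positivity)]
        nlinarith [pow_pos hε 2]

theorem norm_tsum_smul_sq_le (hv : IsHilbertSeqWith 𝕜 v C) (α : lp (fun _ : ι => 𝕜) 2) :
    ‖∑' n, α n • v n‖ ^ 2 ≤ C ^ 2 * ∑' n, ‖α n‖ ^ 2 :=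
  le_of_tendsto_of_tendsto' ((hv.summable_smul α).hasSum.norm.pow 2)
    ((lp.summable_norm_sq α).hasSum.const_mul _) fun s => hv s α

end IsHilbertSeqWith

end InnerProductSpace

theorem hilbertSeq_of_offDiagonal_decay
    {𝕜 H : Type*} [RCLike 𝕜] [NormedAddCommGroup H] [InnerProductSpace 𝕜 H]
    [CompleteSpace H]
    (h : ℤ → H) (φ : ℕ → ℝ) (hφ : ∀ j, 0 ≤ φ j)
    (hdec : ∀ m n : ℤ, m ≤ n → ‖(inner 𝕜 (h n) (h m) : 𝕜)‖ ≤ φ (n - m).toNat)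
    (hsum : Summable φ) :
    -- `(h_n)` is a Hilbert sequence, with the explicit constant:
    (∃ C : ℝ, 0 < C ∧ IsHilbertSeqWith 𝕜 h C) ∧
    (∀ (s : Finset ℤ) (α : ℤ → 𝕜),
      ‖∑ n ∈ s, α n • h n‖ ^ 2 ≤
        (φ 0 + 2 * ∑' j : ℕ, φ (j + 1)) * ∑ n ∈ s, ‖α n‖ ^ 2) ∧
    -- and for every `α ∈ ℓ²(ℤ)` the series converges with the same bound:
    (∀ α : lp (fun _ : ℤ => 𝕜) 2,
      Summable (fun n => α n • h n) ∧
      ‖∑' n : ℤ, α n • h n‖ ^ 2 ≤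
        (φ 0 + 2 * ∑' j : ℕ, φ (j + 1)) * ∑' n : ℤ, ‖α n‖ ^ 2) := by
  set K := φ 0 + 2 * ∑' j : ℕ, φ (j + 1)
  have hK : HasSum (fun k : ℤ => φ k.natAbs) K := by
    simpa using ((summable_nat_add_iff 1).2 hsum).hasSum.comp_natAbs
  have hK0 : 0 ≤ K := hK.nonneg fun _ => hφ _
  have hinner : ∀ n m, ‖(inner 𝕜 (h n) (h m) : 𝕜)‖ ≤ φ (n - m).natAbs := by
    intro n m
    rcases le_total m n with hmn | hnm
    · rw [show (n - m).natAbs = (n - m).toNat by omega]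
      exact hdec m n hmn
    · rw [show (n - m).natAbs = (m - n).toNat by omega, ← inner_conj_symm, RCLike.norm_conj]
      exact hdec n m hnm
  have hfin := norm_sum_smul_sq_le_of_norm_inner_le_natAbs hφ hK hinner
  have hseq : IsHilbertSeqWith 𝕜 h √K := by rwa [IsHilbertSeqWith, Real.sq_sqrt hK0]
  refine ⟨⟨√K + 1, by positivity, hseq.mono (Real.sqrt_nonneg K) (by linarith)⟩, hfin,
    fun α => ⟨hseq.summable_smul α, ?_⟩⟩
  simpa only [Real.sq_sqrt hK0] using hseq.norm_tsum_smul_sq_le α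
end
end
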